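/- For each integer n ≥ 1, consider a recursive estimation process (θ̂_t^{(n)})_{t≥0} with θ̂_0^{(n)} = θ*, per-step conditional tail bound with rate function r(m) = m^κ where κ ≥ γ/2, sample sizes n_0 = n, n_t = c_t·n with c_t = t^{1+s} for some s > 0, and small conditional bias: there exist ρ ≥ 1, a constant b > 0 and nonnegative reals v_1, …, v_p such that for every t ≥ 1 and every coordinate i, almost surely |E[θ̂_{t,i}^{(n)} | F_{t−1}] − θ̂_{t−1,i}^{(n)}| ≤ b · v_i · n_{t−1}^{−ρ}. Then for every δ > 0, lim_{n→∞} limsup_{T→∞} P(‖θ̂_T^{(n)} − θ*‖₂ ≥ δ) = 0. -/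

import Mathlib

/-!
Fix `n` and a coordinate `i`. Doob's decomposition writes `θ̂_{T,i} − θ*_i` as a martingale part
plus a predictable part. The predictable part is the sum of the conditional biases, so it is at
most `b v_i ∑_t n_t^{-ρ} ≤ b v_i W / n` with `W = ∑_t c_t⁻¹ < ∞`. The martingale increments are
orthogonal in `L²` and each one is dominated in `L²` by the step `θ̂_{t+1} − θ̂_t`, whose second
moment is obtained by integrating the tail bound: `E ‖θ̂_{t+1} − θ̂_t‖² ≲ (C₂ n_t^κ)^{-2/γ}`,
which sums over `t` to `O(1/n)` because `2κ/γ ≥ 1`. Once the bias is below `δ / (2√p)`,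
Chebyshev's inequality and a union bound over the coordinates bound `P(‖θ̂_T − θ*‖ ≥ δ)` by a
constant times `1/n`, uniformly in `T`.
-/

open MeasureTheory ProbabilityTheory Filter

/-- The Euclidean (`ℓ²`) norm of a vector in `ℝ^p`. -/
noncomputable def l2norm {p : ℕ} (x : Fin p → ℝ) : ℝ := Real.sqrt (∑ i, (x i) ^ 2)

open Finset Real Set

lemma continuous_l2norm {p : ℕ} : Continuous (l2norm : (Fin p → ℝ) → ℝ) := by
  unfold l2norm; fun_prop

lemma l2norm_nonneg {p : ℕ} (x : Fin p → ℝ) : 0 ≤ l2norm x := sqrt_nonneg _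

lemma abs_apply_le_l2norm {p : ℕ} (x : Fin p → ℝ) (i : Fin p) : |x i| ≤ l2norm x := by
  rw [l2norm, ← sqrt_sq_eq_abs]
  exact sqrt_le_sqrt (single_le_sum (f := fun j => x j ^ 2) (fun j _ => sq_nonneg _) (mem_univ i))

lemma exists_le_abs_apply_of_le_l2norm {p : ℕ} {x : Fin p → ℝ} {δ : ℝ} (hδ : 0 < δ)
    (h : δ ≤ l2norm x) : ∃ i, δ / √p ≤ |x i| := by
  have hsq : δ ^ 2 ≤ ∑ i, x i ^ 2 := (le_sqrt hδ.le (sum_nonneg fun i _ => sq_nonneg _)).1 h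
  have hp : p ≠ 0 := by
    rintro rfl
    simp at hsq
    linarith [sq_pos_of_pos hδ]
  have hconst : ∑ _i : Fin p, δ ^ 2 / p = δ ^ 2 := by
    rw [sum_const, card_univ, Fintype.card_fin, nsmul_eq_mul]
    field_simp
  obtain ⟨i, -, hi⟩ := exists_le_of_sum_le (s := univ) (f := fun _ => δ ^ 2 / p)
    ⟨⟨0, Nat.pos_of_ne_zero hp⟩, mem_univ _⟩ (hconst.trans_le hsq)
  refine ⟨i, ?_⟩
  rw [← sqrt_sq_eq_abs, ← sqrt_sq hδ.le, ← sqrt_div' _ (Nat.cast_nonneg p)]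
  exact sqrt_le_sqrt hi

lemma tendsto_limsup_nhds_zero_of_le {ι : Type*} {l : Filter ι} {u : ι → ℕ → ℝ} {g : ι → ℝ}
    (hu : ∀ n T, 0 ≤ u n T) (hg : Tendsto g l (nhds 0)) (hle : ∀ᶠ n in l, ∀ T, u n T ≤ g n) :
    Tendsto (fun n => limsup (u n) atTop) l (nhds 0) := by
  refine tendsto_of_tendsto_of_tendsto_of_le_of_le' tendsto_const_nhds hg ?_ ?_
  · filter_upwards [hle] with n hn
    exact le_limsup_of_frequently_le (Frequently.of_forall (hu n)) (isBoundedUnder_of ⟨g n, hn⟩)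
  · filter_upwards [hle] with n hn
    exact limsup_le_of_le (isCoboundedUnder_le_of_le atTop (hu n)) (Eventually.of_forall hn)

lemma rpow_neg_le_inv {x q : ℝ} (hx : 1 ≤ x) (hq : 1 ≤ q) : x ^ (-q) ≤ x⁻¹ := by
  simpa [rpow_neg_one] using rpow_le_rpow_of_exponent_le hx (neg_le_neg hq)

lemma one_le_of_eq_rpow {c : ℕ → ℝ} {s : ℝ} (hs : 0 ≤ s) (hc0 : c 0 = 1)
    (hc : ∀ t : ℕ, 1 ≤ t → c t = (t : ℝ) ^ ((1 : ℝ) + s)) (t : ℕ) : 1 ≤ c t := by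
  rcases Nat.eq_zero_or_pos t with rfl | ht
  · exact hc0.ge
  · rw [hc t ht]
    exact one_le_rpow (by exact_mod_cast ht) (by linarith)

lemma summable_inv_of_eq_rpow {c : ℕ → ℝ} {s : ℝ} (hs : 0 < s)
    (hc : ∀ t : ℕ, 1 ≤ t → c t = (t : ℝ) ^ ((1 : ℝ) + s)) : Summable fun t => (c t)⁻¹ :=
  (summable_nat_rpow_inv.2 (by linarith : (1 : ℝ) < 1 + s)).congr_cofinite
    ((eventually_cofinite_ne 0).mono fun t ht => by simp only [hc t (Nat.one_le_iff_ne_zero.2 ht)])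

lemma sum_range_mul_rpow_neg_le {c : ℕ → ℝ} (hc : Summable fun t => (c t)⁻¹)
    (hc1 : ∀ t, 1 ≤ c t) {a q : ℝ} (ha : 0 ≤ a) (hq : 1 ≤ q) {n : ℕ} (hn : 1 ≤ n) (T : ℕ) :
    ∑ u ∈ range T, a * (c u * n) ^ (-q) ≤ a * (∑' t, (c t)⁻¹) / n :=
  calc ∑ u ∈ range T, a * (c u * n) ^ (-q) ≤ a / n * ∑ u ∈ range T, (c u)⁻¹ := by
        rw [mul_sum]
        refine sum_le_sum fun u _ => ?_
        have hcn : 1 ≤ c u * n := one_le_mul_of_one_le_of_one_le (hc1 u) (by exact_mod_cast hn)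
        calc a * (c u * n) ^ (-q) ≤ a * (c u * n)⁻¹ := by gcongr; exact rpow_neg_le_inv hcn hq
          _ = a / n * (c u)⁻¹ := by rw [mul_inv]; ring
    _ ≤ a / n * ∑' t, (c t)⁻¹ := by
        gcongr
        exact hc.sum_le_tsum _ fun u _ => inv_nonneg.2 (zero_le_one.trans (hc1 u))
    _ = a * (∑' t, (c t)⁻¹) / n := by ring

section Moments

variable {Ω : Type*} {m0 : MeasurableSpace Ω} {μ : Measure Ω}

theorem memLp_two_and_integral_sq_le_of_tail_le_exp {X : Ω → ℝ} (hX : Measurable X)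
    (hX0 : ∀ ω, 0 ≤ X ω) {C a γ : ℝ} (hC : 0 ≤ C) (ha : 0 < a) (hγ : 0 < γ)
    (htail : ∀ t > 0, μ {ω | t < X ω} ≤ ENNReal.ofReal (C * exp (-a * t ^ γ))) :
    MemLp X 2 μ ∧ ∫ ω, X ω ^ 2 ∂μ ≤ 2 * C * (a ^ (-2 / γ) * (1 / γ) * Gamma (2 / γ)) := by
  set K := 2 * C * (a ^ (-2 / γ) * (1 / γ) * Gamma (2 / γ))
  have hint := integrableOn_rpow_mul_exp_neg_mul_rpow (s := 1) (by norm_num) hγ ha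
  have hval := integral_rpow_mul_exp_neg_mul_rpow (q := 1) hγ (by norm_num) ha
  have hlint : ∫⁻ ω, ENNReal.ofReal (X ω ^ 2) ∂μ ≤ ENNReal.ofReal K := by
    have hlayer := lintegral_rpow_eq_lintegral_meas_lt_mul μ (ae_of_all _ hX0) hX.aemeasurable
      two_pos
    simp only [rpow_two] at hlayer
    rw [hlayer]
    calc ENNReal.ofReal 2 * ∫⁻ t in Ioi 0, μ {ω | t < X ω} * ENNReal.ofReal (t ^ ((2:ℝ) - 1))
        ≤ ENNReal.ofReal 2 * ∫⁻ t in Ioi 0,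
            ENNReal.ofReal (C * (t ^ (1:ℝ) * exp (-a * t ^ γ))) := by
          gcongr ENNReal.ofReal 2 * ?_
          refine setLIntegral_mono' measurableSet_Ioi fun t ht => ?_
          rw [show (2:ℝ) - 1 = 1 by norm_num, mul_left_comm, mul_comm,
            ENNReal.ofReal_mul' (by positivity)]
          gcongr
          exact htail t ht
      _ = ENNReal.ofReal K := by
          rw [← ofReal_integral_eq_lintegral_ofReal (hint.const_mul C)
            (ae_restrict_of_forall_mem measurableSet_Ioi fun t ht => by
              have : 0 < t := ht
              positivity),
            ← ENNReal.ofReal_mul zero_le_two, integral_const_mul, hval]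
          congr 1
          norm_num [K]
          ring
  have hK : 0 ≤ K := by positivity
  have hX2 : Integrable (fun ω => X ω ^ 2) μ :=
    ⟨(hX.pow_const 2).aestronglyMeasurable, (hasFiniteIntegral_iff_ofReal
      (ae_of_all _ fun ω => sq_nonneg _)).2 (hlint.trans_lt ENNReal.ofReal_lt_top)⟩
  refine ⟨(memLp_two_iff_integrable_sq hX.aestronglyMeasurable).2 hX2, ?_⟩
  rw [integral_eq_lintegral_of_nonneg_ae (ae_of_all _ fun ω => sq_nonneg _)
    (hX.pow_const 2).aestronglyMeasurable]
  exact ENNReal.toReal_le_of_le_ofReal hK hlint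

theorem measure_le_ofReal_of_condExp_indicator_le [IsProbabilityMeasure μ]
    {m : MeasurableSpace Ω} (hm : m ≤ m0) {s : Set Ω} (hs : MeasurableSet[m0] s) {C : ℝ}
    (h : ∀ᵐ ω ∂μ, μ[s.indicator fun _ => (1 : ℝ) | m] ω ≤ C) : μ s ≤ ENNReal.ofReal C := by
  rw [← ofReal_measureReal]
  gcongr
  calc μ.real s = ∫ ω, μ[s.indicator fun _ => (1 : ℝ) | m] ω ∂μ := by
        rw [integral_condExp hm, integral_indicator_const (1 : ℝ) hs, smul_eq_mul, mul_one]
    _ ≤ ∫ _, C ∂μ := integral_mono_ae integrable_condExp (integrable_const C) h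
    _ = C := by simp

theorem memLp_two_and_integral_sq_le_of_condExp_tail [IsProbabilityMeasure μ]
    {m : MeasurableSpace Ω} (hm : m ≤ m0) {X : Ω → ℝ} (hX : Measurable[m0] X) (hX0 : ∀ ω, 0 ≤ X ω)
    {C₁ C₂ γ κ x : ℝ} (hC₁ : 0 ≤ C₁) (hC₂ : 0 < C₂) (hγ : 0 < γ) (hx : 0 < x)
    (htail : ∀ t > 0, ∀ᵐ ω ∂μ, μ[{ω | t < X ω}.indicator fun _ => (1 : ℝ) | m] ω
      ≤ C₁ * exp (-C₂ * x ^ κ * t ^ γ)) :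
    MemLp X 2 μ ∧ ∫ ω, X ω ^ 2 ∂μ
      ≤ 2 * C₁ * (C₂ ^ (-2 / γ) * (1 / γ) * Gamma (2 / γ)) * x ^ (-(2 * κ / γ)) := by
  obtain ⟨hL2, hbound⟩ := memLp_two_and_integral_sq_le_of_tail_le_exp hX hX0 hC₁
    (mul_pos hC₂ (rpow_pos_of_pos hx κ)) hγ fun t ht => by
      simpa only [neg_mul] using measure_le_ofReal_of_condExp_indicator_le hm
        (measurableSet_lt measurable_const hX) (htail t ht)
  refine ⟨hL2, hbound.trans_eq ?_⟩
  rw [mul_rpow hC₂.le (rpow_nonneg hx.le κ), ← rpow_mul hx.le,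
    show κ * (-2 / γ) = -(2 * κ / γ) by ring]
  ring

theorem measureReal_abs_ge_le_integral_sq_div_sq {X : Ω → ℝ}
    (hX : Integrable (fun ω => X ω ^ 2) μ) {ε : ℝ} (hε : 0 < ε) :
    μ.real {ω | ε ≤ |X ω|} ≤ (∫ ω, X ω ^ 2 ∂μ) / ε ^ 2 := by
  have hset : {ω | ε ≤ |X ω|} = {ω | ε ^ 2 ≤ X ω ^ 2} := by
    ext ω
    simp [sq_le_sq, abs_of_pos hε]
  rw [hset, le_div_iff₀ (by positivity), mul_comm]
  exact mul_meas_ge_le_integral_of_nonneg (ae_of_all _ fun ω => sq_nonneg _) hX _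

theorem integral_sq_sub_condExp_le [IsFiniteMeasure μ] {m : MeasurableSpace Ω} (hm : m ≤ m0)
    {X : Ω → ℝ} (hX : MemLp X 2 μ) :
    ∫ ω, (X ω - μ[X | m] ω) ^ 2 ∂μ ≤ ∫ ω, X ω ^ 2 ∂μ :=
  calc ∫ ω, (X ω - μ[X | m] ω) ^ 2 ∂μ = ∫ ω, Var[X; μ | m] ω ∂μ := (integral_condExp hm).symm
    _ ≤ ∫ ω, μ[X ^ 2 | m] ω ∂μ :=
      integral_mono_ae integrable_condVar integrable_condExp (condVar_ae_le_condExp_sq hm hX)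
    _ = ∫ ω, X ω ^ 2 ∂μ := integral_condExp hm

theorem memLp_apply_and_integral_sq_le {p : ℕ} {Y : Ω → Fin p → ℝ} (hY : Measurable Y)
    (hY2 : MemLp (fun ω => l2norm (Y ω)) 2 μ) (i : Fin p) :
    MemLp (fun ω => Y ω i) 2 μ ∧ ∫ ω, Y ω i ^ 2 ∂μ ≤ ∫ ω, l2norm (Y ω) ^ 2 ∂μ := by
  have hle : ∀ ω, |Y ω i| ≤ l2norm (Y ω) := fun ω => abs_apply_le_l2norm (Y ω) i
  have hYi : MemLp (fun ω => Y ω i) 2 μ :=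
    hY2.of_le ((measurable_pi_apply i).comp hY).aestronglyMeasurable (ae_of_all _ fun ω => by
      simpa [abs_of_nonneg (l2norm_nonneg _)] using hle ω)
  exact ⟨hYi, integral_mono hYi.integrable_sq hY2.integrable_sq fun ω =>
    sq_le_sq' (abs_le.1 (hle ω)).1 (abs_le.1 (hle ω)).2⟩

end Moments

section Martingale

variable {Ω : Type*} {m0 : MeasurableSpace Ω} {μ : Measure Ω} {ℱ : Filtration ℕ m0}
  {f : ℕ → Ω → ℝ}

lemma martingalePart_add_one_sub (n : ℕ) :
    martingalePart f ℱ μ (n + 1) - martingalePart f ℱ μ n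
      = f (n + 1) - f n - μ[f (n + 1) - f n | ℱ n] := by
  simp only [martingalePart, predictablePart_add_one]
  abel

lemma memLp_of_memLp_zero_of_memLp_sub (hf0 : MemLp (f 0) 2 μ)
    (hΔ : ∀ u, MemLp (f (u + 1) - f u) 2 μ) (n : ℕ) : MemLp (f n) 2 μ := by
  rw [eq_sum_range_sub f n]
  exact hf0.add (memLp_finsetSum' _ fun u _ => hΔ u)

lemma memLp_martingalePart (hf0 : MemLp (f 0) 2 μ) (hΔ : ∀ u, MemLp (f (u + 1) - f u) 2 μ)
    (n : ℕ) : MemLp (martingalePart f ℱ μ n) 2 μ :=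
  (memLp_of_memLp_zero_of_memLp_sub hf0 hΔ n).sub
    (memLp_finsetSum' _ fun u _ => (hΔ u).condExp one_le_two)

variable [IsFiniteMeasure μ]

theorem MeasureTheory.Martingale.integral_mul_sub_eq_zero {M : ℕ → Ω → ℝ}
    (hM : Martingale M ℱ μ) {i j : ℕ} (hij : i ≤ j) {X : Ω → ℝ} (hX : StronglyMeasurable[ℱ i] X)
    (hXM : Integrable (X * (M j - M i)) μ) : ∫ ω, X ω * (M j ω - M i ω) ∂μ = 0 := by
  have hcond : μ[M j - M i | ℱ i] =ᵐ[μ] 0 := by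
    filter_upwards [condExp_sub (hM.integrable j) (hM.integrable i) (ℱ i),
      hM.condExp_ae_eq hij] with ω hsub hj
    simp [hsub, hj,
      condExp_of_stronglyMeasurable (ℱ.le i) (hM.stronglyAdapted i) (hM.integrable i)]
  calc ∫ ω, X ω * (M j ω - M i ω) ∂μ = ∫ ω, μ[X * (M j - M i) | ℱ i] ω ∂μ :=
        (integral_condExp (ℱ.le i)).symm
    _ = ∫ ω, (X * μ[M j - M i | ℱ i]) ω ∂μ := integral_congr_ae
        (condExp_mul_of_stronglyMeasurable_left hX hXM ((hM.integrable j).sub (hM.integrable i)))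
    _ = 0 := by
        rw [integral_congr_ae (EventuallyEq.rfl.mul hcond)]
        simp

theorem MeasureTheory.Martingale.integral_sq_sub_eq_sum {M : ℕ → Ω → ℝ} (hM : Martingale M ℱ μ)
    (hM2 : ∀ n, MemLp (M n) 2 μ) (T : ℕ) :
    ∫ ω, (M T ω - M 0 ω) ^ 2 ∂μ = ∑ u ∈ range T, ∫ ω, (M (u + 1) ω - M u ω) ^ 2 ∂μ := by
  induction T with
  | zero => simp
  | succ T ih =>
    have hA : MemLp (M T - M 0) 2 μ := (hM2 T).sub (hM2 0)
    have hD : MemLp (M (T + 1) - M T) 2 μ := (hM2 (T + 1)).sub (hM2 T)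
    have hcross : ∫ ω, (M T ω - M 0 ω) * (M (T + 1) ω - M T ω) ∂μ = 0 :=
      hM.integral_mul_sub_eq_zero T.le_succ
        ((hM.stronglyAdapted T).sub ((hM.stronglyAdapted 0).mono (ℱ.mono T.zero_le)))
        (hA.integrable_mul hD)
    have hexpand : ∀ ω, (M (T + 1) ω - M 0 ω) ^ 2 = (M T ω - M 0 ω) ^ 2
        + (2 * ((M T ω - M 0 ω) * (M (T + 1) ω - M T ω)) + (M (T + 1) ω - M T ω) ^ 2) :=
      fun ω => by ring
    have hA2 : Integrable (fun ω => (M T ω - M 0 ω) ^ 2) μ := hA.integrable_sq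
    have hD2 : Integrable (fun ω => (M (T + 1) ω - M T ω) ^ 2) μ := hD.integrable_sq
    have hAD : Integrable (fun ω => 2 * ((M T ω - M 0 ω) * (M (T + 1) ω - M T ω))) μ :=
      (hA.integrable_mul hD).const_mul 2
    have hrest : Integrable (fun ω => 2 * ((M T ω - M 0 ω) * (M (T + 1) ω - M T ω))
        + (M (T + 1) ω - M T ω) ^ 2) μ := hAD.add hD2
    simp_rw [hexpand]
    rw [integral_add hA2 hrest, integral_add hAD hD2, integral_const_mul, hcross, ih,
      sum_range_succ]
    ring

theorem integral_sq_martingalePart_sub_le (hf : StronglyAdapted ℱ f) (hf0 : MemLp (f 0) 2 μ)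
    (hΔ : ∀ u, MemLp (f (u + 1) - f u) 2 μ) (T : ℕ) :
    ∫ ω, (martingalePart f ℱ μ T ω - f 0 ω) ^ 2 ∂μ
      ≤ ∑ u ∈ range T, ∫ ω, (f (u + 1) ω - f u ω) ^ 2 ∂μ := by
  have hM := martingale_martingalePart hf fun n =>
    (memLp_of_memLp_zero_of_memLp_sub hf0 hΔ n).integrable one_le_two
  rw [← martingalePart_zero (f := f) (ℱ := ℱ) (μ := μ),
    hM.integral_sq_sub_eq_sum (memLp_martingalePart hf0 hΔ) T]
  refine sum_le_sum fun u _ => ?_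
  have h := congrFun (martingalePart_add_one_sub (f := f) (ℱ := ℱ) (μ := μ) u)
  simp only [Pi.sub_apply] at h
  simp_rw [h]
  exact integral_sq_sub_condExp_le (ℱ.le u) (hΔ u)

theorem ae_abs_predictablePart_le (hf : StronglyAdapted ℱ f) (hfi : ∀ n, Integrable (f n) μ)
    {B : ℕ → ℝ} (hB : ∀ u, ∀ᵐ ω ∂μ, |μ[f (u + 1) | ℱ u] ω - f u ω| ≤ B u) (T : ℕ) :
    ∀ᵐ ω ∂μ, |predictablePart f ℱ μ T ω| ≤ ∑ u ∈ range T, B u := by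
  have hbias : ∀ u, μ[f (u + 1) - f u | ℱ u] =ᵐ[μ] μ[f (u + 1) | ℱ u] - f u := fun u => by
    conv_rhs => rw [← condExp_of_stronglyMeasurable (ℱ.le u) (hf u) (hfi u)]
    exact condExp_sub (hfi _) (hfi u) _
  filter_upwards [ae_all_iff.2 hbias, ae_all_iff.2 hB] with ω hω hBω
  simp only [predictablePart, Finset.sum_apply]
  refine (abs_sum_le_sum_abs _ _).trans (sum_le_sum fun u _ => ?_)
  simpa [hω u] using hBω u

end Martingale

section NearMartingale

variable {Ω : Type*} {m0 : MeasurableSpace Ω} {μ : Measure Ω} [IsFiniteMeasure μ]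
  {ℱ : Filtration ℕ m0}

theorem measureReal_abs_sub_ge_two_mul_le {f : ℕ → Ω → ℝ} (hf : Adapted ℱ f)
    (hf0 : MemLp (f 0) 2 μ) (hΔ : ∀ u, MemLp (f (u + 1) - f u) 2 μ) {B : ℕ → ℝ}
    (hB : ∀ u, ∀ᵐ ω ∂μ, |μ[f (u + 1) | ℱ u] ω - f u ω| ≤ B u) {ε : ℝ} (hε : 0 < ε) {T : ℕ}
    (hBT : ∑ u ∈ range T, B u ≤ ε) :
    μ.real {ω | 2 * ε ≤ |f T ω - f 0 ω|}
      ≤ (∑ u ∈ range T, ∫ ω, (f (u + 1) ω - f u ω) ^ 2 ∂μ) / ε ^ 2 := by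
  have hf' : StronglyAdapted ℱ f := hf.stronglyAdapted
  have hfi : ∀ n, Integrable (f n) μ := fun n =>
    (memLp_of_memLp_zero_of_memLp_sub hf0 hΔ n).integrable one_le_two
  set M := martingalePart f ℱ μ T
  have hM2 : Integrable (fun ω => (M ω - f 0 ω) ^ 2) μ :=
    ((memLp_martingalePart hf0 hΔ T).sub hf0).integrable_sq
  have hsub : {ω | 2 * ε ≤ |f T ω - f 0 ω|} ≤ᵐ[μ] {ω | ε ≤ |M ω - f 0 ω|} := by
    filter_upwards [ae_abs_predictablePart_le hf' hfi hB T] with ω hP (hω : 2 * ε ≤ _)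
    have hdecomp : f T ω - f 0 ω = (M ω - f 0 ω) + predictablePart f ℱ μ T ω := by
      simp only [M, martingalePart, Pi.sub_apply]
      ring
    rw [hdecomp] at hω
    show ε ≤ _
    have := abs_add_le (M ω - f 0 ω) (predictablePart f ℱ μ T ω)
    linarith
  calc μ.real {ω | 2 * ε ≤ |f T ω - f 0 ω|} ≤ μ.real {ω | ε ≤ |M ω - f 0 ω|} :=
        ENNReal.toReal_mono (measure_ne_top _ _) (measure_mono_ae hsub)
    _ ≤ (∫ ω, (M ω - f 0 ω) ^ 2 ∂μ) / ε ^ 2 := measureReal_abs_ge_le_integral_sq_div_sq hM2 hε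
    _ ≤ _ := by
        gcongr
        exact integral_sq_martingalePart_sub_le hf' hf0 hΔ T

theorem measureReal_l2norm_sub_ge_le {p : ℕ} {θ : ℕ → Ω → Fin p → ℝ} {θ₀ : Fin p → ℝ}
    (hθ : Adapted ℱ θ) (h0 : ∀ᵐ ω ∂μ, θ 0 ω = θ₀) {σ : ℕ → ℝ}
    (hΔ : ∀ u, MemLp (fun ω => l2norm (θ (u + 1) ω - θ u ω)) 2 μ)
    (hσ : ∀ u, ∫ ω, l2norm (θ (u + 1) ω - θ u ω) ^ 2 ∂μ ≤ σ u) {B : Fin p → ℕ → ℝ}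
    (hB : ∀ i u, ∀ᵐ ω ∂μ, |μ[fun ω => θ (u + 1) ω i | ℱ u] ω - θ u ω i| ≤ B i u)
    {δ : ℝ} (hδ : 0 < δ) {T : ℕ} (hBT : ∀ i, ∑ u ∈ range T, B i u ≤ δ / (2 * √p)) :
    μ.real {ω | δ ≤ l2norm (θ T ω - θ₀)} ≤ 4 * p ^ 2 * (∑ u ∈ range T, σ u) / δ ^ 2 := by
  set ε := δ / (2 * √p)
  have hcoord : ∀ i, μ.real {ω | 2 * ε ≤ |θ T ω i - θ 0 ω i|}
      ≤ 4 * p * (∑ u ∈ range T, σ u) / δ ^ 2 := by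
    intro i
    have hp : 0 < p := i.pos
    have hΔi := fun u => memLp_apply_and_integral_sq_le (hθ.measurable.sub hθ.measurable) (hΔ u) i
    calc μ.real {ω | 2 * ε ≤ |θ T ω i - θ 0 ω i|}
        ≤ (∑ u ∈ range T, ∫ ω, (θ (u + 1) ω i - θ u ω i) ^ 2 ∂μ) / ε ^ 2 :=
          measureReal_abs_sub_ge_two_mul_le (f := fun t ω => θ t ω i)
            (fun t => (measurable_pi_apply i).comp (hθ t))
            ((memLp_const (θ₀ i)).ae_eq (h0.mono fun ω hω => by simp [hω]))
            (fun u => (hΔi u).1) (hB i) (by positivity) (hBT i)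
      _ ≤ (∑ u ∈ range T, σ u) / ε ^ 2 := by
          gcongr with u
          exact (hΔi u).2.trans (hσ u)
      _ = 4 * p * (∑ u ∈ range T, σ u) / δ ^ 2 := by
          simp only [ε, div_pow, mul_pow, sq_sqrt (Nat.cast_nonneg p)]
          field_simp
          ring
  have hcover : {ω | δ ≤ l2norm (θ T ω - θ₀)} ≤ᵐ[μ] ⋃ i, {ω | 2 * ε ≤ |θ T ω i - θ 0 ω i|} := by
    filter_upwards [h0] with ω hω (hδω : δ ≤ _)
    obtain ⟨i, hi⟩ := exists_le_abs_apply_of_le_l2norm hδ hδω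
    refine mem_iUnion.2 ⟨i, ?_⟩
    show 2 * ε ≤ _
    rw [hω, show 2 * ε = δ / √p by ring]
    exact hi
  calc μ.real {ω | δ ≤ l2norm (θ T ω - θ₀)}
      ≤ μ.real (⋃ i, {ω | 2 * ε ≤ |θ T ω i - θ 0 ω i|}) :=
        ENNReal.toReal_mono (measure_ne_top _ _) (measure_mono_ae hcover)
    _ ≤ ∑ i : Fin p, μ.real {ω | 2 * ε ≤ |θ T ω i - θ 0 ω i|} := measureReal_iUnion_fintype_le _
    _ ≤ ∑ _i : Fin p, 4 * p * (∑ u ∈ range T, σ u) / δ ^ 2 := sum_le_sum fun i _ => hcoord i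
    _ = 4 * p ^ 2 * (∑ u ∈ range T, σ u) / δ ^ 2 := by
        rw [sum_const, card_univ, Fintype.card_fin, nsmul_eq_mul]
        ring

end NearMartingale

theorem stmt_7_general
    {Ω : Type} [mΩ : MeasurableSpace Ω] (μ : Measure Ω) [IsProbabilityMeasure μ]
    (p : ℕ) (θstar : Fin p → ℝ)
    (C₁ C₂ γ κ s ρ b : ℝ) (hC₁ : 0 < C₁) (hC₂ : 0 < C₂) (hγ : 0 < γ)
    (hκγ : γ / 2 ≤ κ) (hs : 0 < s) (hρ : 1 ≤ ρ) (hb : 0 < b)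
    (v : Fin p → ℝ) (hv : ∀ i, 0 ≤ v i)
    (c : ℕ → ℝ) (hc0 : c 0 = 1) (hc : ∀ t : ℕ, 1 ≤ t → c t = (t : ℝ) ^ ((1 : ℝ) + s))
    (F : ℕ → Filtration ℕ mΩ)
    (θhat : ℕ → ℕ → Ω → (Fin p → ℝ))
    (hadapt : ∀ n, Adapted (F n) (θhat n))
    (h0 : ∀ n, ∀ᵐ ω ∂μ, θhat n 0 ω = θstar)
    (htail : ∀ n : ℕ, 1 ≤ n → ∀ t : ℕ, 1 ≤ t → ∀ δ' : ℝ, 0 < δ' →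
      ∀ᵐ ω ∂μ,
        (μ[Set.indicator {ω' | δ' < l2norm (θhat n t ω' - θhat n (t - 1) ω')}
            (fun _ => (1 : ℝ)) | (F n) (t - 1)]) ω
          ≤ C₁ * Real.exp (-C₂ * (c (t - 1) * n) ^ κ * δ' ^ γ))
    (hbias : ∀ n : ℕ, 1 ≤ n → ∀ t : ℕ, 1 ≤ t → ∀ i : Fin p,
      ∀ᵐ ω ∂μ,
        |(μ[(fun ω' => θhat n t ω' i) | (F n) (t - 1)]) ω - θhat n (t - 1) ω i|
          ≤ b * v i * (c (t - 1) * n) ^ (-ρ)) :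
    ∀ δ : ℝ, 0 < δ →
      Tendsto (fun n : ℕ =>
          limsup (fun T : ℕ => (μ {ω | δ ≤ l2norm (θhat n T ω - θstar)}).toReal) atTop)
        atTop (nhds 0) := by
  intro δ hδ
  have hc1 := one_le_of_eq_rpow hs.le hc0 hc
  have hW := summable_inv_of_eq_rpow hs hc
  have hq : 1 ≤ 2 * κ / γ := by rw [le_div_iff₀ hγ]; linarith
  set W := ∑' t, (c t)⁻¹
  set K := 2 * C₁ * (C₂ ^ (-2 / γ) * (1 / γ) * Gamma (2 / γ))
  have hsmall : ∀ᶠ n : ℕ in atTop, ∀ i, b * v i * W / n ≤ δ / (2 * √p) :=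
    eventually_all.2 fun i => (tendsto_const_div_atTop_nhds_zero_nat _).eventually
      (eventually_le_nhds (by have := i.pos; positivity))
  refine tendsto_limsup_nhds_zero_of_le (g := fun n : ℕ => 4 * p ^ 2 * (K * W / n) / δ ^ 2)
    (fun n T => ENNReal.toReal_nonneg) ?_ ?_
  · simpa using ((tendsto_const_div_atTop_nhds_zero_nat (K * W)).const_mul
      (4 * (p : ℝ) ^ 2)).div_const (δ ^ 2)
  filter_upwards [eventually_ge_atTop 1, hsmall] with n hn hsmall T
  have hstep := fun u => memLp_two_and_integral_sq_le_of_condExp_tail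
    (X := fun ω => l2norm (θhat n (u + 1) ω - θhat n u ω)) (x := c u * n) ((F n).le u)
    (continuous_l2norm.measurable.comp ((hadapt n).measurable.sub (hadapt n).measurable))
    (fun _ => l2norm_nonneg _) hC₁.le hC₂ hγ
    (mul_pos (zero_lt_one.trans_le (hc1 u)) (Nat.cast_pos.2 hn)) fun t ht => by
      simpa only [Nat.add_sub_cancel] using htail n hn (u + 1) (by omega) t ht
  refine (measureReal_l2norm_sub_ge_le (hadapt n) (h0 n) (fun u => (hstep u).1)
    (fun u => (hstep u).2) (fun i u => by
      simpa only [Nat.add_sub_cancel] using hbias n hn (u + 1) (by omega) i) hδ fun i =>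
        (sum_range_mul_rpow_neg_le hW hc1 (by have := hv i; positivity) hρ hn T).trans
          (hsmall i)).trans ?_
  gcongr
  exact sum_range_mul_rpow_neg_le hW hc1 (by positivity) hq hn T

/-- For recursive estimation processes `(θ̂_t^{(n)})` with `θ̂_0^{(n)} = θ*`,
per-step conditional tail bound with rate function `r(m) = m^κ` where `κ ≥ γ/2`, sample sizes
`n_0 = n`, `n_t = c_t n` with `c_t = t^{1+s}` (`s > 0`), and small conditional bias
(`|E[θ̂_{t,i} | F_{t−1}] − θ̂_{t−1,i}| ≤ b v_i n_{t−1}^{−ρ}` a.s. with `ρ ≥ 1`), for every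
`δ > 0`: `lim_{n→∞} limsup_{T→∞} P(‖θ̂_T^{(n)} − θ*‖₂ ≥ δ) = 0`. -/
theorem stmt_7
    {Ω : Type} [mΩ : MeasurableSpace Ω] (μ : Measure Ω) [IsProbabilityMeasure μ]
    (p : ℕ) (hp : 1 ≤ p) (θstar : Fin p → ℝ)
    (C₁ C₂ γ κ s ρ b : ℝ) (hC₁ : 0 < C₁) (hC₂ : 0 < C₂) (hγ : 0 < γ)
    (hκγ : γ / 2 ≤ κ) (hs : 0 < s) (hρ : 1 ≤ ρ) (hb : 0 < b)
    (v : Fin p → ℝ) (hv : ∀ i, 0 ≤ v i)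
    (c : ℕ → ℝ) (hc0 : c 0 = 1) (hc : ∀ t : ℕ, 1 ≤ t → c t = (t : ℝ) ^ ((1 : ℝ) + s))
    (F : ℕ → Filtration ℕ mΩ)
    (θhat : ℕ → ℕ → Ω → (Fin p → ℝ))
    (hadapt : ∀ n, Adapted (F n) (θhat n))
    (h0 : ∀ n, ∀ᵐ ω ∂μ, θhat n 0 ω = θstar)
    (htail : ∀ n : ℕ, 1 ≤ n → ∀ t : ℕ, 1 ≤ t → ∀ δ' : ℝ, 0 < δ' →
      ∀ᵐ ω ∂μ,
        (μ[Set.indicator {ω' | δ' < l2norm (θhat n t ω' - θhat n (t - 1) ω')}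
            (fun _ => (1 : ℝ)) | (F n) (t - 1)]) ω
          ≤ C₁ * Real.exp (-C₂ * (c (t - 1) * n) ^ κ * δ' ^ γ))
    (hbias : ∀ n : ℕ, 1 ≤ n → ∀ t : ℕ, 1 ≤ t → ∀ i : Fin p,
      ∀ᵐ ω ∂μ,
        |(μ[(fun ω' => θhat n t ω' i) | (F n) (t - 1)]) ω - θhat n (t - 1) ω i|
          ≤ b * v i * (c (t - 1) * n) ^ (-ρ)) :
    ∀ δ : ℝ, 0 < δ →
      Tendsto (fun n : ℕ =>
          limsup (fun T : ℕ => (μ {ω | δ ≤ l2norm (θhat n T ω - θstar)}).toReal) atTop)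
        atTop (nhds 0) :=
  stmt_7_general (mΩ := mΩ) μ p θstar C₁ C₂ γ κ s ρ b hC₁ hC₂ hγ hκγ hs hρ hb v hv c hc0 hc F θhat
    hadapt h0 htail hbias
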